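/- Define F : ℝ³∖{0} → ℝ by F(w) = (w1² + 2√3 w1 w2 − w2² − 8 w3²) / (w1² + w2² + w3²)^{5/2}. Then for each of the three unit-sphere directions v ∈ { (0,0,1), (√3/2, 1/2, 0), (1/2, −√3/2, 0) } and each δ ∈ {L, −L} with L > 0, the gradient of F at the point 2δv is parallel to v; equivalently the cross product v × ∇F(2δv) = 0. Consequently each of the six points (x,y) = (δv, δv) ∈ ℝ³ × ℝ³ is an equilibrium of the reduced equations ẋ = 2 x × ∇_x 𝒦(x,y), ẏ = 2 y × ∇_y 𝒦(x,y), where 𝒦(x,y) = c·F(x+y) for any constant c. -/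

import Mathlib

open Real Matrix

/-- The function `F(w) = (w1² + 2√3 w1w2 − w2² − 8w3²)/‖w‖⁵` on `ℝ³∖{0}`. -/
noncomputable def F (w : Fin 3 → ℝ) : ℝ :=
  ((w 0) ^ 2 + 2 * Real.sqrt 3 * (w 0) * (w 1) - (w 1) ^ 2 - 8 * (w 2) ^ 2)
    / Real.sqrt (((w 0) ^ 2 + (w 1) ^ 2 + (w 2) ^ 2) ^ 5)

/-- Gradient of a function on `ℝ³` (vector of partial derivatives). -/
noncomputable def grad (f : (Fin 3 → ℝ) → ℝ) (w : Fin 3 → ℝ) : Fin 3 → ℝ :=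
  fun i => fderiv ℝ f w (Pi.single i 1)

/-!
`F(w) = φ(wᵀAw, wᵀw)` with `φ(a, b) = a / √(b⁵)` and `A = numeratorMatrix` symmetric, and the three
directions are unit eigenvectors of `A` (eigenvalues `-8`, `2`, `-2`). At a point `s • v` of such an
eigen-ray the differentials of both quadratic forms vanish on `v^⊥`, hence so does `dF`, and the
gradient of `F` there is parallel to `v`. The partial gradients of `c F(x + y)` at `(δv, δv)` are
both `c ∇F(2δv)`, so the equations of motion vanish as well.
-/

theorem fderiv_comp_prodMk_apply_eq_zero {𝕜 E G₁ G₂ H : Type*} [NontriviallyNormedField 𝕜]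
    [NormedAddCommGroup E] [NormedSpace 𝕜 E] [NormedAddCommGroup G₁] [NormedSpace 𝕜 G₁]
    [NormedAddCommGroup G₂] [NormedSpace 𝕜 G₂] [NormedAddCommGroup H] [NormedSpace 𝕜 H]
    {φ : G₁ × G₂ → H} {f : E → G₁} {g : E → G₂} {p w : E}
    (hφ : DifferentiableAt 𝕜 φ (f p, g p)) (hf : DifferentiableAt 𝕜 f p)
    (hg : DifferentiableAt 𝕜 g p) (hfw : fderiv 𝕜 f p w = 0) (hgw : fderiv 𝕜 g p w = 0) :
    fderiv 𝕜 (fun x => φ (f x, g x)) p w = 0 := by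
  have hcomp : HasFDerivAt (fun x => φ (f x, g x)) _ p :=
    hφ.hasFDerivAt.comp p (hf.hasFDerivAt.prodMk hg.hasFDerivAt)
  simp [hcomp.fderiv, hfw, hgw, Prod.mk_zero_zero]

section QuadraticForm

variable {n : Type*} [Fintype n]

theorem differentiable_dotProduct_mulVec (A : Matrix n n ℝ) :
    Differentiable ℝ (fun x : n → ℝ => x ⬝ᵥ A *ᵥ x) := by
  unfold dotProduct mulVec dotProduct
  fun_prop

theorem fderiv_dotProduct_mulVec_apply (A : Matrix n n ℝ) (p h : n → ℝ) :
    fderiv ℝ (fun x : n → ℝ => x ⬝ᵥ A *ᵥ x) p h = h ⬝ᵥ A *ᵥ p + p ⬝ᵥ A *ᵥ h := by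
  rw [← (differentiable_dotProduct_mulVec A p).lineDeriv_eq_fderiv, lineDeriv]
  have hexpand : (fun t : ℝ => (p + t • h) ⬝ᵥ A *ᵥ (p + t • h)) =
      fun t => p ⬝ᵥ A *ᵥ p + t * (h ⬝ᵥ A *ᵥ p + p ⬝ᵥ A *ᵥ h) + t ^ 2 * (h ⬝ᵥ A *ᵥ h) := by
    ext t
    simp only [mulVec_add, mulVec_smul, add_dotProduct, dotProduct_add, smul_dotProduct,
      dotProduct_smul, smul_eq_mul]
    ring
  rw [hexpand]
  exact ((((hasDerivAt_id 0).mul_const _).const_add _).fun_add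
    ((hasDerivAt_pow 2 0).mul_const _)).deriv.trans (by simp)

theorem fderiv_dotProduct_mulVec_smul_apply_eq_zero {A : Matrix n n ℝ} (hA : A.IsSymm)
    {v w : n → ℝ} {μ : ℝ} (hAv : A *ᵥ v = μ • v) (hw : v ⬝ᵥ w = 0) (s : ℝ) :
    fderiv ℝ (fun x : n → ℝ => x ⬝ᵥ A *ᵥ x) (s • v) w = 0 := by
  rw [fderiv_dotProduct_mulVec_apply, mulVec_smul, hAv, dotProduct_mulVec (s • v),
    ← mulVec_transpose, hA.eq, mulVec_smul, hAv]
  simp [dotProduct_comm w, hw]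

theorem fderiv_comp_dotProduct_mulVec_apply_eq_zero {φ : ℝ × ℝ → ℝ} {A B : Matrix n n ℝ}
    (hA : A.IsSymm) (hB : B.IsSymm) {v w : n → ℝ} {μ ν : ℝ} (hAv : A *ᵥ v = μ • v)
    (hBv : B *ᵥ v = ν • v) (hw : v ⬝ᵥ w = 0) (s : ℝ)
    (hφ : DifferentiableAt ℝ φ ((s • v) ⬝ᵥ A *ᵥ (s • v), (s • v) ⬝ᵥ B *ᵥ (s • v))) :
    fderiv ℝ (fun x => φ (x ⬝ᵥ A *ᵥ x, x ⬝ᵥ B *ᵥ x)) (s • v) w = 0 :=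
  fderiv_comp_prodMk_apply_eq_zero hφ (differentiable_dotProduct_mulVec A _)
    (differentiable_dotProduct_mulVec B _) (fderiv_dotProduct_mulVec_smul_apply_eq_zero hA hAv hw s)
    (fderiv_dotProduct_mulVec_smul_apply_eq_zero hB hBv hw s)

end QuadraticForm

theorem crossProduct_eq_zero_of_forall_dotProduct_eq_zero {R : Type*} [CommRing R]
    [LinearOrder R] [IsStrictOrderedRing R] {v g : Fin 3 → R}
    (h : ∀ w, v ⬝ᵥ w = 0 → g ⬝ᵥ w = 0) : v ⨯₃ g = 0 := by
  -- `v ⨯₃ (v ⨯₃ g)` is orthogonal to `v` and pairs with `g` to `-‖v ⨯₃ g‖²`.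
  have hperp := h (v ⨯₃ (v ⨯₃ g)) (dot_self_cross v _)
  rw [triple_product_permutation, triple_product_permutation, ← cross_anticomm v g,
    dotProduct_neg, neg_eq_zero] at hperp
  exact dotProduct_self_eq_zero.mp hperp

theorem grad_dotProduct_eq_fderiv (f : (Fin 3 → ℝ) → ℝ) (p w : Fin 3 → ℝ) :
    grad f p ⬝ᵥ w = fderiv ℝ f p w := by
  conv_rhs => rw [pi_eq_sum_univ' w]
  simp [grad, dotProduct, mul_comm]

theorem crossProduct_grad_eq_zero_of_fderiv {f : (Fin 3 → ℝ) → ℝ} {v p : Fin 3 → ℝ}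
    (h : ∀ w, v ⬝ᵥ w = 0 → fderiv ℝ f p w = 0) : v ⨯₃ grad f p = 0 :=
  crossProduct_eq_zero_of_forall_dotProduct_eq_zero fun w hw =>
    (grad_dotProduct_eq_fderiv f p w).trans (h w hw)

theorem grad_const_mul_comp_add_right (f : (Fin 3 → ℝ) → ℝ) (c : ℝ) (a b : Fin 3 → ℝ) :
    grad (fun x => c * f (x + a)) b = c • grad f (b + a) := by
  ext i
  change fderiv ℝ (c • fun x => f (x + a)) b _ = _
  rw [fderiv_const_smul_field, Pi.smul_apply, fderiv_comp_add_right]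
  rfl

theorem grad_const_mul_comp_add_left (f : (Fin 3 → ℝ) → ℝ) (c : ℝ) (a b : Fin 3 → ℝ) :
    grad (fun y => c * f (a + y)) b = c • grad f (a + b) := by
  simpa only [add_comm a] using grad_const_mul_comp_add_right f c a b

noncomputable def numeratorMatrix : Matrix (Fin 3) (Fin 3) ℝ :=
  !![1, √3, 0; √3, -1, 0; 0, 0, -8]

theorem numeratorMatrix_isSymm : numeratorMatrix.IsSymm := by
  ext i j
  fin_cases i <;> fin_cases j <;> rfl

theorem F_eq_div_sqrt (x : Fin 3 → ℝ) :
    F x = x ⬝ᵥ numeratorMatrix *ᵥ x / √((x ⬝ᵥ x) ^ 5) := by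
  unfold F
  congr 1
  · simp [numeratorMatrix, dotProduct, mulVec, Fin.sum_univ_three]
    ring
  · simp [dotProduct, Fin.sum_univ_three, sq]

theorem differentiableAt_div_sqrt_pow {a b : ℝ} (hb : 0 < b) (k : ℕ) :
    DifferentiableAt ℝ (fun q : ℝ × ℝ => q.1 / √(q.2 ^ k)) (a, b) := by
  fun_prop (disch := positivity)

def relEquilibriumDirections : Set (Fin 3 → ℝ) :=
  {![0, 0, 1], ![√3 / 2, 1 / 2, 0], ![1 / 2, -√3 / 2, 0]}

variable {v : Fin 3 → ℝ}

theorem exists_numeratorMatrix_mulVec_eq_smul (hv : v ∈ relEquilibriumDirections) :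
    ∃ μ : ℝ, numeratorMatrix *ᵥ v = μ • v := by
  have h3 : √3 ^ 2 = 3 := sq_sqrt (by norm_num)
  simp only [relEquilibriumDirections, Set.mem_insert_iff, Set.mem_singleton_iff] at hv
  rcases hv with rfl | rfl | rfl <;> [use -8; use 2; use -2] <;> ext i <;> fin_cases i <;>
    simp [numeratorMatrix, mulVec, dotProduct, Fin.sum_univ_three] <;> grind

theorem dotProduct_self_of_mem_relEquilibriumDirections (hv : v ∈ relEquilibriumDirections) :
    v ⬝ᵥ v = 1 := by
  have h3 : √3 ^ 2 = 3 := sq_sqrt (by norm_num)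
  simp only [relEquilibriumDirections, Set.mem_insert_iff, Set.mem_singleton_iff] at hv
  rcases hv with rfl | rfl | rfl <;> simp [dotProduct, Fin.sum_univ_three] <;> grind

theorem fderiv_F_smul_apply_eq_zero (hv : v ∈ relEquilibriumDirections) {s : ℝ} (hs : s ≠ 0)
    {w : Fin 3 → ℝ} (hw : v ⬝ᵥ w = 0) :
    fderiv ℝ F (s • v) w = 0 := by
  obtain ⟨μ, hμ⟩ := exists_numeratorMatrix_mulVec_eq_smul hv
  have hF : F = fun x => (fun q : ℝ × ℝ => q.1 / √(q.2 ^ 5))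
      (x ⬝ᵥ numeratorMatrix *ᵥ x, x ⬝ᵥ 1 *ᵥ x) := by
    ext x
    simp only [one_mulVec, F_eq_div_sqrt]
  have hnorm : 0 < (s • v) ⬝ᵥ 1 *ᵥ (s • v) := by
    simp only [one_mulVec, smul_dotProduct, dotProduct_smul, smul_eq_mul,
      dotProduct_self_of_mem_relEquilibriumDirections hv, mul_one]
    exact mul_self_pos.mpr hs
  rw [hF]
  exact fderiv_comp_dotProduct_mulVec_apply_eq_zero numeratorMatrix_isSymm isSymm_one hμ
    ((one_mulVec v).trans (one_smul ℝ v).symm) hw s (differentiableAt_div_sqrt_pow hnorm 5)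

/-- For each of the three unit directions `v` and each `δ = ±L`, the gradient
of `F` at `2δv` is parallel to `v` (their cross product vanishes); consequently each point
`(x,y) = (δv, δv)` is an equilibrium of `ẋ = 2x × ∇ₓ𝒦`, `ẏ = 2y × ∇_y𝒦` for
`𝒦(x,y) = c·F(x+y)` with any constant `c`. -/
theorem six_relative_equilibria (L : ℝ) (hL : 0 < L) (v : Fin 3 → ℝ)
    (hv : v = ![0, 0, 1] ∨ v = ![Real.sqrt 3 / 2, 1 / 2, 0] ∨
      v = ![1 / 2, -(Real.sqrt 3) / 2, 0])
    (δ : ℝ) (hδ : δ = L ∨ δ = -L) :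
    crossProduct v (grad F ((2 * δ) • v)) = 0 ∧
    ∀ c : ℝ,
      (2 : ℝ) • crossProduct (δ • v) (grad (fun x => c * F (x + δ • v)) (δ • v)) = 0 ∧
      (2 : ℝ) • crossProduct (δ • v) (grad (fun y => c * F (δ • v + y)) (δ • v)) = 0 := by
  have hδ0 : δ ≠ 0 := by rcases hδ with rfl | rfl <;> simp [hL.ne']
  have hparallel : v ⨯₃ grad F ((2 * δ) • v) = 0 :=
    crossProduct_grad_eq_zero_of_fderiv fun w hw =>
      fderiv_F_smul_apply_eq_zero hv (mul_ne_zero two_ne_zero hδ0) hw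
  have hdouble : δ • v + δ • v = (2 * δ) • v := by rw [← add_smul, two_mul]
  refine ⟨hparallel, fun c => ⟨?_, ?_⟩⟩
  · simp [grad_const_mul_comp_add_right, hdouble, hparallel]
  · simp [grad_const_mul_comp_add_left, hdouble, hparallel]
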